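/- Let I be a strongly stable monomial ideal of S. Then the integral closure Ī of I is again a strongly stable monomial ideal. -/

import Mathlib

open MvPolynomial

/-- An ideal of `K[x_1, …, x_n]` is a monomial ideal if it is generated by monomials. -/
def IsMonomialIdeal {K : Type*} [Field K] {n : ℕ} (I : Ideal (MvPolynomial (Fin n) K)) : Prop :=
  ∃ G : Set (Fin n →₀ ℕ),
    I = Ideal.span ((fun a => (monomial a (1 : K) : MvPolynomial (Fin n) K)) '' G)

/-- A monomial ideal `I` is strongly stable if for every monomial `u ∈ I` and all
indices `i < j` with `x_j ∣ u`, one has `x_i * (u / x_j) ∈ I`. -/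
def IsStronglyStable {K : Type*} [Field K] {n : ℕ}
    (I : Ideal (MvPolynomial (Fin n) K)) : Prop :=
  ∀ a : Fin n →₀ ℕ, (monomial a (1 : K) : MvPolynomial (Fin n) K) ∈ I →
    ∀ i j : Fin n, i < j → 1 ≤ a j →
      (monomial (a - Finsupp.single j 1 + Finsupp.single i 1) (1 : K) :
        MvPolynomial (Fin n) K) ∈ I

/-- The integral closure of a monomial ideal `I`: the ideal generated by all
monomials `u` such that `u ^ k ∈ I ^ k` for some integer `k ≥ 1`. -/
noncomputable def monomialIntegralClosure {K : Type*} [Field K] {n : ℕ}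
    (I : Ideal (MvPolynomial (Fin n) K)) : Ideal (MvPolynomial (Fin n) K) :=
  Ideal.span {m | ∃ a : Fin n →₀ ℕ, m = (monomial a (1 : K) : MvPolynomial (Fin n) K) ∧
    ∃ k : ℕ, 1 ≤ k ∧ m ^ k ∈ I ^ k}

/-! Strong stability of a monomial ideal only has to be checked on a generating set of
monomials: it suffices that `x_i w` lies in the ideal for every generator `x_j w` and every
`i < j`. Products of strongly stable monomial ideals are therefore strongly stable, and so is
`I ^ k`. The integral closure is generated by the monomials `v` with `v ^ k ∈ I ^ k`; if
`v = x_j w`, performing the exchange `x_j ↦ x_i` on all `k` copies of `x_j` in `v ^ k` gives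
`(x_i w) ^ k ∈ I ^ k`, so `x_i w` is again a generator. -/

open Finsupp (single)
open scoped Pointwise

section MonomialSpan

variable {σ R : Type*} [CommSemiring R]

theorem monomial_one_mem_span_monomial_one_image_iff [Nontrivial R] {G : Set (σ →₀ ℕ)}
    {a : σ →₀ ℕ} :
    monomial a (1 : R) ∈ Ideal.span ((fun b => monomial b (1 : R)) '' G) ↔ ∃ b ∈ G, b ≤ a := by
  classical
  rw [mem_ideal_span_monomial_image, support_monomial, if_neg one_ne_zero]
  simp

theorem monomial_one_mem_of_le {J : Ideal (MvPolynomial σ R)} {a b : σ →₀ ℕ}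
    (hb : monomial b (1 : R) ∈ J) (hba : b ≤ a) : monomial a (1 : R) ∈ J := by
  simpa [monomial_mul, tsub_add_cancel_of_le hba] using J.mul_mem_left (monomial (a - b) 1) hb

theorem span_monomial_one_image_mul_span (G H : Set (σ →₀ ℕ)) :
    Ideal.span ((fun a => monomial a (1 : R)) '' G) *
        Ideal.span ((fun a => monomial a (1 : R)) '' H) =
      Ideal.span ((fun a => monomial a (1 : R)) '' (G + H)) := by
  rw [Ideal.span_mul_span', ← Set.image2_mul, Set.image2_image_left, Set.image2_image_right,
    ← Set.image2_add, Set.image_image2]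
  simp only [monomial_mul, one_mul]

end MonomialSpan

theorem Finsupp.add_eq_add_single_one_cases {ι : Type*} {g h c : ι →₀ ℕ} {j : ι}
    (hgh : g + h = c + single j 1) :
    (∃ g', g = g' + single j 1 ∧ c = g' + h) ∨ (∃ h', h = h' + single j 1 ∧ c = g + h') := by
  have hj : c j < g j + h j := by simpa using congr($hgh j).ge
  rcases Nat.eq_zero_or_pos (g j) with hg | hg
  · have hh : single j 1 ≤ h := Finsupp.single_le_iff.mpr (by omega)
    refine .inr ⟨h - single j 1, (tsub_add_cancel_of_le hh).symm,
      add_right_cancel (b := single j 1) ?_⟩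
    rw [← hgh, add_assoc, tsub_add_cancel_of_le hh]
  · have hg : single j 1 ≤ g := Finsupp.single_le_iff.mpr hg
    refine .inl ⟨g - single j 1, (tsub_add_cancel_of_le hg).symm,
      add_right_cancel (b := single j 1) ?_⟩
    rw [← hgh, add_right_comm, tsub_add_cancel_of_le hg]

section StronglyStable

variable {K : Type*} [Field K] {n : ℕ}

theorem isStronglyStable_iff {I : Ideal (MvPolynomial (Fin n) K)} :
    IsStronglyStable I ↔ ∀ (c : Fin n →₀ ℕ) (i j : Fin n), i < j →
      monomial (c + single j 1) (1 : K) ∈ I → monomial (c + single i 1) (1 : K) ∈ I := by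
  refine ⟨fun h c i j hij hc => by simpa using h _ hc i j hij (by simp),
    fun h a ha i j hij haj => ?_⟩
  rw [← tsub_add_cancel_of_le (Finsupp.single_le_iff.mpr haj : single j 1 ≤ a)] at ha
  exact h _ i j hij ha

theorem IsStronglyStable.monomial_add_single_mem {I : Ideal (MvPolynomial (Fin n) K)}
    (hI : IsStronglyStable I) {i j : Fin n} (hij : i < j) (t : ℕ) (c : Fin n →₀ ℕ)
    (hc : monomial (c + single j t) (1 : K) ∈ I) : monomial (c + single i t) (1 : K) ∈ I := by
  induction t generalizing c with
  | zero => simpa using hc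
  | succ t ih =>
    rw [Finsupp.single_add, ← add_assoc] at hc
    have := isStronglyStable_iff.mp hI _ i j hij hc
    rw [add_right_comm] at this
    simpa only [Finsupp.single_add, add_assoc, add_comm (single i 1)] using ih _ this

theorem isStronglyStable_span_monomial_one_image {G : Set (Fin n →₀ ℕ)}
    (hG : ∀ (c : Fin n →₀ ℕ) (i j : Fin n), i < j → c + single j 1 ∈ G →
      monomial (c + single i 1) (1 : K) ∈ Ideal.span ((fun a => monomial a (1 : K)) '' G)) :
    IsStronglyStable (Ideal.span ((fun a => monomial a (1 : K)) '' G)) := by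
  rw [isStronglyStable_iff]
  intro c i j hij hc
  obtain ⟨b, hb, hbc⟩ := monomial_one_mem_span_monomial_one_image_iff.mp hc
  rcases Nat.eq_zero_or_pos (b j) with hbj | hbj
  · have : b ≤ c := fun x => by
      rcases eq_or_ne x j with rfl | hx
      · simp [hbj]
      · simpa [Finsupp.single_apply, hx.symm] using hbc x
    exact monomial_one_mem_span_monomial_one_image_iff.mpr ⟨b, hb, this.trans le_self_add⟩
  · rw [← tsub_add_cancel_of_le (Finsupp.single_le_iff.mpr hbj : single j 1 ≤ b)] at hb
    exact monomial_one_mem_of_le (hG _ i j hij hb)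
      (add_le_add (tsub_le_iff_right.mpr hbc) le_rfl)

theorem IsMonomialIdeal.mul {I J : Ideal (MvPolynomial (Fin n) K)} (hI : IsMonomialIdeal I)
    (hJ : IsMonomialIdeal J) : IsMonomialIdeal (I * J) := by
  obtain ⟨G, rfl⟩ := hI
  obtain ⟨H, rfl⟩ := hJ
  exact ⟨G + H, span_monomial_one_image_mul_span G H⟩

theorem IsStronglyStable.mul {I J : Ideal (MvPolynomial (Fin n) K)} (hI : IsMonomialIdeal I)
    (hJ : IsMonomialIdeal J) (hsI : IsStronglyStable I) (hsJ : IsStronglyStable J) :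
    IsStronglyStable (I * J) := by
  obtain ⟨G, rfl⟩ := hI
  obtain ⟨H, rfl⟩ := hJ
  rw [span_monomial_one_image_mul_span]
  refine isStronglyStable_span_monomial_one_image ?_
  rintro c i j hij ⟨g, hg, h, hh, hgh⟩
  rw [← span_monomial_one_image_mul_span]
  have hgI := Ideal.subset_span (Set.mem_image_of_mem (fun a => monomial a (1 : K)) hg)
  have hhJ := Ideal.subset_span (Set.mem_image_of_mem (fun a => monomial a (1 : K)) hh)
  obtain ⟨g', rfl, rfl⟩ | ⟨h', rfl, rfl⟩ := Finsupp.add_eq_add_single_one_cases hgh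
  · have := Ideal.mul_mem_mul (isStronglyStable_iff.mp hsI g' i j hij hgI) hhJ
    rwa [monomial_mul, one_mul, add_right_comm] at this
  · have := Ideal.mul_mem_mul hgI (isStronglyStable_iff.mp hsJ h' i j hij hhJ)
    rwa [monomial_mul, one_mul, ← add_assoc] at this

theorem IsMonomialIdeal.top : IsMonomialIdeal (⊤ : Ideal (MvPolynomial (Fin n) K)) :=
  ⟨{0}, by simp⟩

theorem IsMonomialIdeal.pow {I : Ideal (MvPolynomial (Fin n) K)} (hI : IsMonomialIdeal I)
    (k : ℕ) : IsMonomialIdeal (I ^ k) := by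
  induction k with
  | zero => simpa using IsMonomialIdeal.top
  | succ k ih => simpa only [pow_succ] using ih.mul hI

theorem IsStronglyStable.pow {I : Ideal (MvPolynomial (Fin n) K)} (hI : IsMonomialIdeal I)
    (hsI : IsStronglyStable I) (k : ℕ) : IsStronglyStable (I ^ k) := by
  induction k with
  | zero =>
    rw [pow_zero, Ideal.one_eq_top]
    exact fun _ _ _ _ _ _ => Submodule.mem_top
  | succ k ih => simpa only [pow_succ] using ih.mul (hI.pow k) hI hsI

theorem monomialIntegralClosure_eq_span (I : Ideal (MvPolynomial (Fin n) K)) :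
    monomialIntegralClosure I = Ideal.span ((fun a => monomial a (1 : K)) ''
      {a | ∃ k : ℕ, 1 ≤ k ∧ monomial a (1 : K) ^ k ∈ I ^ k}) := by
  rw [monomialIntegralClosure]
  congr 1
  ext m
  constructor
  · rintro ⟨a, rfl, ha⟩
    exact ⟨a, ha, rfl⟩
  · rintro ⟨a, ha, rfl⟩
    exact ⟨a, rfl, ha⟩

end StronglyStable

/-- If `I` is a strongly stable monomial ideal, then its integral closure is again a
strongly stable monomial ideal. -/
theorem integralClosure_stronglyStable {K : Type*} [Field K] {n : ℕ}
    (I : Ideal (MvPolynomial (Fin n) K)) (hmon : IsMonomialIdeal I)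
    (hSS : IsStronglyStable I) :
    IsMonomialIdeal (monomialIntegralClosure I) ∧
      IsStronglyStable (monomialIntegralClosure I) := by
  rw [monomialIntegralClosure_eq_span]
  refine ⟨⟨_, rfl⟩, isStronglyStable_span_monomial_one_image ?_⟩
  rintro c i j hij ⟨k, hk, hck⟩
  refine Ideal.subset_span ⟨c + single i 1, ⟨k, hk, ?_⟩, rfl⟩
  rw [monomial_pow, one_pow, smul_add, Finsupp.smul_single_one] at hck ⊢
  exact (hSS.pow hmon k).monomial_add_single_mem hij k _ hck
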